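/- Let n ≥ 1 and let D̃ = (1/(2n−1)!!)·∏_{k=1}^{n} (sin r·(d/dr) + (2k−1)·cos r), the composition taken with smaller values of k to the left (the k = 1 factor applied last). Then for every smooth function f : ℝ → ℂ and every r ∈ ℝ with sin r ≠ 0: D̃ applied to the function s ↦ f″(s) + 2n·(cos s/sin s)·f′(s), evaluated at r, equals (D̃f)″(r) + n²·(D̃f)(r). -/

import Mathlib

/-- The factor `Ã_k` given by `(Ã_k g)(r) = sin r · g'(r) + (2k-1) cos r · g(r)`. -/
noncomputable def Asph (k : ℕ) (g : ℝ → ℂ) : ℝ → ℂ :=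
  fun r => (Real.sin r : ℂ) * deriv g r + (2 * (k : ℂ) - 1) * (Real.cos r : ℂ) * g r

/-- `AsphChain n f = Ã₁(Ã₂(⋯(Ãₙ f)⋯))`, the composition with smaller indices to
the left. -/
noncomputable def AsphChain : ℕ → (ℝ → ℂ) → (ℝ → ℂ)
  | 0, f => f
  | n + 1, f => AsphChain n (Asph (n + 1) f)

/-- The shift operator `D̃ = (1/(2n-1)!!) ∏_{k=1}^n (sin r d/dr + (2k-1) cos r)`. -/
noncomputable def Dsph (n : ℕ) (f : ℝ → ℂ) : ℝ → ℂ :=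
  fun r => ((Nat.doubleFactorial (2 * n - 1) : ℂ))⁻¹ * AsphChain n f r

/-! Each factor intertwines two radial Laplacians `L_m u = u'' + 2m cot · u'` up to a shift:
`Ã_{m+1} (L_{m+1} g) = L_m (Ã_{m+1} g) + (2m+1) Ã_{m+1} g` away from the zeros of `sin`.
Applying `Ã_1 ⋯ Ã_m` and inducting on `m` (with `L_0 u = u''`) turns the accumulated shifts
`1 + 3 + ⋯ + (2m-1)` into `m²`. The function `L_m g` is only smooth where `sin ≠ 0`, so the
linearity of the factors is used locally. -/

open scoped ContDiff Topology

/-- The radial part of the Laplacian of `S^{2m+1}`. -/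
noncomputable def radialLaplacian (m : ℕ) (u : ℝ → ℂ) : ℝ → ℂ :=
  fun s => deriv (deriv u) s + 2 * (m : ℂ) * ((Real.cos s : ℂ) / (Real.sin s : ℂ)) * deriv u s

lemma contDiff_ofReal_sin : ContDiff ℝ ∞ (fun s : ℝ => (Real.sin s : ℂ)) :=
  Complex.ofRealCLM.contDiff.comp Real.contDiff_sin

lemma contDiff_ofReal_cos : ContDiff ℝ ∞ (fun s : ℝ => (Real.cos s : ℂ)) :=
  Complex.ofRealCLM.contDiff.comp Real.contDiff_cos

lemma hasDerivAt_ofReal_sin (x : ℝ) :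
    HasDerivAt (fun s : ℝ => (Real.sin s : ℂ)) (Real.cos x : ℂ) x :=
  (Real.hasDerivAt_sin x).ofReal_comp

lemma hasDerivAt_ofReal_cos (x : ℝ) :
    HasDerivAt (fun s : ℝ => (Real.cos s : ℂ)) (-(Real.sin x : ℂ)) x := by
  simpa using (Real.hasDerivAt_cos x).ofReal_comp

lemma isOpen_setOf_sin_ne_zero : IsOpen {s : ℝ | Real.sin s ≠ 0} :=
  isOpen_compl_singleton.preimage Real.continuous_sin

lemma contDiffOn_ofReal_cot :
    ContDiffOn ℝ ∞ (fun s : ℝ => (Real.cos s : ℂ) / (Real.sin s : ℂ)) {s | Real.sin s ≠ 0} :=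
  (contDiff_ofReal_cos.contDiffOn.mul (contDiff_ofReal_sin.contDiffOn.inv
    fun _ hx => Complex.ofReal_ne_zero.mpr hx)).congr fun _ _ => div_eq_mul_inv _ _

section Smooth

variable {𝕜 F : Type*} [NontriviallyNormedField 𝕜] [NormedAddCommGroup F] [NormedSpace 𝕜 F]
  {g : 𝕜 → F}

lemma ContDiff.hasDerivAt_deriv (hg : ContDiff 𝕜 ∞ g) (x : 𝕜) : HasDerivAt g (deriv g x) x :=
  (hg.differentiable (by simp) x).hasDerivAt

lemma ContDiff.deriv_infty (hg : ContDiff 𝕜 ∞ g) : ContDiff 𝕜 ∞ (deriv g) :=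
  (contDiff_infty_iff_deriv.mp hg).2

end Smooth

lemma contDiff_Asph (k : ℕ) {g : ℝ → ℂ} (hg : ContDiff ℝ ∞ g) : ContDiff ℝ ∞ (Asph k g) :=
  (contDiff_ofReal_sin.mul hg.deriv_infty).add ((contDiff_const.mul contDiff_ofReal_cos).mul hg)

lemma contDiffOn_Asph (k : ℕ) {U : Set ℝ} (hU : IsOpen U) {u : ℝ → ℂ}
    (hu : ContDiffOn ℝ ∞ u U) : ContDiffOn ℝ ∞ (Asph k u) U :=
  (contDiff_ofReal_sin.contDiffOn.mul (hu.deriv_of_isOpen hU le_rfl)).add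
    ((contDiff_const.contDiffOn.mul contDiff_ofReal_cos.contDiffOn).mul hu)

lemma contDiffOn_radialLaplacian (m : ℕ) {u : ℝ → ℂ} (hu : ContDiff ℝ ∞ u) :
    ContDiffOn ℝ ∞ (radialLaplacian m u) {s | Real.sin s ≠ 0} :=
  hu.deriv_infty.deriv_infty.contDiffOn.add
    ((contDiff_const.contDiffOn.mul contDiffOn_ofReal_cot).mul hu.deriv_infty.contDiffOn)

lemma deriv_Asph (k : ℕ) {g : ℝ → ℂ} (hg : ContDiff ℝ ∞ g) :
    deriv (Asph k g) = fun x =>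
      (Real.sin x : ℂ) * deriv (deriv g) x + 2 * (k : ℂ) * (Real.cos x : ℂ) * deriv g x
        - (2 * (k : ℂ) - 1) * (Real.sin x : ℂ) * g x := by
  funext x
  have hsin := (hasDerivAt_ofReal_sin x).mul (hg.deriv_infty.hasDerivAt_deriv x)
  have hcos := ((hasDerivAt_ofReal_cos x).const_mul (2 * (k : ℂ) - 1)).mul (hg.hasDerivAt_deriv x)
  refine (hsin.add hcos).deriv.trans ?_
  ring

lemma deriv_deriv_Asph (k : ℕ) {g : ℝ → ℂ} (hg : ContDiff ℝ ∞ g) (x : ℝ) :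
    deriv (deriv (Asph k g)) x =
      (Real.sin x : ℂ) * deriv (deriv (deriv g)) x
        + (2 * (k : ℂ) + 1) * (Real.cos x : ℂ) * deriv (deriv g) x
        - (4 * (k : ℂ) - 1) * (Real.sin x : ℂ) * deriv g x
        - (2 * (k : ℂ) - 1) * (Real.cos x : ℂ) * g x := by
  have hg'' := (hasDerivAt_ofReal_sin x).mul (hg.deriv_infty.deriv_infty.hasDerivAt_deriv x)
  have hg' := ((hasDerivAt_ofReal_cos x).const_mul (2 * (k : ℂ))).mul
    (hg.deriv_infty.hasDerivAt_deriv x)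
  have hg₀ := ((hasDerivAt_ofReal_sin x).const_mul (2 * (k : ℂ) - 1)).mul (hg.hasDerivAt_deriv x)
  rw [deriv_Asph k hg]
  refine ((hg''.add hg').sub hg₀).deriv.trans ?_
  ring

theorem Asph_radialLaplacian_succ (m : ℕ) {g : ℝ → ℂ} (hg : ContDiff ℝ ∞ g) {r : ℝ}
    (hr : Real.sin r ≠ 0) :
    Asph (m + 1) (radialLaplacian (m + 1) g) r
      = radialLaplacian m (Asph (m + 1) g) r + (2 * m + 1) * Asph (m + 1) g r := by
  have hsin : (Real.sin r : ℂ) ≠ 0 := Complex.ofReal_ne_zero.mpr hr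
  have hcot := (hasDerivAt_ofReal_cos r).fun_div (hasDerivAt_ofReal_sin r) hsin
  have hlap : HasDerivAt (radialLaplacian (m + 1) g) _ r :=
    (hg.deriv_infty.deriv_infty.hasDerivAt_deriv r).add
      ((hcot.const_mul (2 * ((m + 1 : ℕ) : ℂ))).mul (hg.deriv_infty.hasDerivAt_deriv r))
  simp only [Asph, radialLaplacian]
  rw [hlap.deriv, deriv_deriv_Asph _ hg, deriv_Asph _ hg]
  push_cast at hsin ⊢
  field_simp
  ring

lemma Asph_congr (k : ℕ) {u v : ℝ → ℂ} {r : ℝ} (h : u =ᶠ[𝓝 r] v) :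
    Asph k u =ᶠ[𝓝 r] Asph k v := by
  filter_upwards [h, h.deriv] with x hx hdx
  simp only [Asph, hx, hdx]

lemma AsphChain_congr (m : ℕ) {u v : ℝ → ℂ} {r : ℝ} (h : u =ᶠ[𝓝 r] v) :
    AsphChain m u =ᶠ[𝓝 r] AsphChain m v := by
  induction m generalizing u v with
  | zero => exact h
  | succ m ih => exact ih (Asph_congr _ h)

lemma Asph_const_mul (k : ℕ) (c : ℂ) (u : ℝ → ℂ) :
    Asph k (fun s => c * u s) = fun s => c * Asph k u s := by
  funext x
  simp only [Asph, deriv_const_mul_field']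
  ring

lemma AsphChain_const_mul (m : ℕ) (c : ℂ) (u : ℝ → ℂ) :
    AsphChain m (fun s => c * u s) = fun s => c * AsphChain m u s := by
  induction m generalizing u with
  | zero => rfl
  | succ m ih => exact (congrArg (AsphChain m) (Asph_const_mul _ c u)).trans (ih _)

lemma Asph_add_apply (k : ℕ) {u v : ℝ → ℂ} {x : ℝ} (hu : DifferentiableAt ℝ u x)
    (hv : DifferentiableAt ℝ v x) :
    Asph k (fun s => u s + v s) x = Asph k u x + Asph k v x := by
  simp only [Asph, deriv_fun_add hu hv]
  ring

lemma AsphChain_add_apply (m : ℕ) {U : Set ℝ} (hU : IsOpen U) {u v : ℝ → ℂ}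
    (hu : ContDiffOn ℝ ∞ u U) (hv : ContDiffOn ℝ ∞ v U) {r : ℝ} (hr : r ∈ U) :
    AsphChain m (fun s => u s + v s) r = AsphChain m u r + AsphChain m v r := by
  induction m generalizing u v with
  | zero => rfl
  | succ m ih =>
    have hadd : Asph (m + 1) (fun s => u s + v s) =ᶠ[𝓝 r]
        fun s => Asph (m + 1) u s + Asph (m + 1) v s := by
      filter_upwards [hU.mem_nhds hr] with x hx
      exact Asph_add_apply _ ((hu.contDiffAt (hU.mem_nhds hx)).differentiableAt (by simp))
        ((hv.contDiffAt (hU.mem_nhds hx)).differentiableAt (by simp))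
    exact (AsphChain_congr m hadd).eq_of_nhds.trans
      (ih (contDiffOn_Asph _ hU hu) (contDiffOn_Asph _ hU hv))

theorem AsphChain_radialLaplacian (m : ℕ) {g : ℝ → ℂ} (hg : ContDiff ℝ ∞ g) {r : ℝ}
    (hr : Real.sin r ≠ 0) :
    AsphChain m (radialLaplacian m g) r
      = deriv (deriv (AsphChain m g)) r + (m : ℂ) ^ 2 * AsphChain m g r := by
  induction m generalizing g with
  | zero => simp [AsphChain, radialLaplacian]
  | succ m ih =>
    set h := Asph (m + 1) g
    have hh : ContDiff ℝ ∞ h := contDiff_Asph _ hg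
    have hstep : Asph (m + 1) (radialLaplacian (m + 1) g) =ᶠ[𝓝 r]
        fun s => radialLaplacian m h s + (2 * m + 1) * h s := by
      filter_upwards [isOpen_setOf_sin_ne_zero.mem_nhds hr] with x hx
      exact Asph_radialLaplacian_succ m hg hx
    calc AsphChain (m + 1) (radialLaplacian (m + 1) g) r
        = AsphChain m (fun s => radialLaplacian m h s + (2 * m + 1) * h s) r :=
          (AsphChain_congr m hstep).eq_of_nhds
      _ = AsphChain m (radialLaplacian m h) r + (2 * m + 1) * AsphChain m h r := by
          rw [AsphChain_add_apply m isOpen_setOf_sin_ne_zero (contDiffOn_radialLaplacian m hh)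
            (contDiff_const.mul hh).contDiffOn hr, AsphChain_const_mul]
      _ = deriv (deriv (AsphChain m h)) r + ((m + 1 : ℕ) : ℂ) ^ 2 * AsphChain m h r := by
          rw [ih hh]
          push_cast
          ring

theorem stmt_3_general (n : ℕ) (f : ℝ → ℂ) (hf : ContDiff ℝ (⊤ : ℕ∞) f)
    (r : ℝ) (hr : Real.sin r ≠ 0) :
    Dsph n (fun s => deriv (deriv f) s
        + 2 * (n : ℂ) * ((Real.cos s : ℂ) / (Real.sin s : ℂ)) * deriv f s) r
      = deriv (deriv (Dsph n f)) r + (n : ℂ) ^ 2 * Dsph n f r := by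
  have hchain := AsphChain_radialLaplacian n hf hr
  unfold radialLaplacian at hchain
  unfold Dsph
  rw [deriv_const_mul_field', deriv_const_mul_field', hchain]
  ring

/-- Intertwining property of `D̃` with the radial spherical Laplacian on
`S^{2n+1}`. -/
theorem stmt_3 (n : ℕ) (hn : 1 ≤ n) (f : ℝ → ℂ) (hf : ContDiff ℝ (⊤ : ℕ∞) f)
    (r : ℝ) (hr : Real.sin r ≠ 0) :
    Dsph n (fun s => deriv (deriv f) s
        + 2 * (n : ℂ) * ((Real.cos s : ℂ) / (Real.sin s : ℂ)) * deriv f s) r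
      = deriv (deriv (Dsph n f)) r + (n : ℂ) ^ 2 * Dsph n f r :=
  stmt_3_general n f hf r hr
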